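/- Asymptotics of the Lagrange multiplier: min_{cl D} q < μ^λ ≤ min_{cl D} q + Cλ^{1/2} for all small λ > 0, given the identity E(ω^λ) = -(1/2)∫ Gω^λ ω^λ + ∫(Gω^λ + q - μ^λ)ω^λ + λμ^λ, the bounds ‖Gω^λ‖_∞ ≤ Cλ^{1/2}, ∫(Gω^λ + q - μ^λ)ω^λ ≥ -Cλ^{3/2}, E(ω^λ) ≤ λ min q + Cλ^{3/2}, Gω^λ ≥ 0, and nonemptiness of Ω^λ. -/

import Mathlib

/-!
Since `Gω ≥ 0`, every point of `Ω^λ = {Gω + q < μ}` satisfies `m ≤ q < μ`, which gives the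
lower bound and reduces the bound on `q` over `Ω^λ` to the upper bound on `μ`. For the latter,
solve the energy identity for `λ μ`: the upper bound on the energy, the lower bound on the
Lagrange term and `∫ Gω ω ≤ ‖Gω‖_∞ ∫ ω = O(λ^{3/2})` give `λ μ ≤ λ m + (5/2) C λ^{3/2}`.
-/

open Set MeasureTheory

theorem Real.rpow_three_halves_eq_mul_sqrt {x : ℝ} (hx : 0 ≤ x) :
    x ^ ((3 : ℝ) / 2) = x * √x := by
  rw [show (3 : ℝ) / 2 = 1 + 1 / 2 by norm_num, Real.rpow_add' hx (by norm_num), Real.rpow_one,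
    Real.sqrt_eq_rpow]

theorem setIntegral_mul_le_mul_setIntegral {α : Type*} [MeasurableSpace α] {μ : Measure α}
    {s : Set α} (hs : MeasurableSet s) {f g : α → ℝ} {B : ℝ}
    (hf : ∀ x ∈ s, 0 ≤ f x ∧ f x ≤ B) (hg : ∀ x, 0 ≤ g x) (hgi : IntegrableOn g s μ) :
    ∫ x in s, f x * g x ∂μ ≤ B * ∫ x in s, g x ∂μ := by
  rw [← integral_const_mul]
  refine integral_mono_of_nonneg ?_ (hgi.const_mul B) ?_ <;>
    filter_upwards [ae_restrict_mem hs] with x hx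
  · exact mul_nonneg (hf x hx).1 (hg x)
  · exact mul_le_mul_of_nonneg_right (hf x hx).2 (hg x)

theorem le_add_mul_sqrt_of_energy_identity {lam μ m E I J C : ℝ} (hlam : 0 < lam)
    (hE : E = -(1 / 2) * I + J + lam * μ) (hEup : E ≤ lam * m + C * lam ^ ((3 : ℝ) / 2))
    (hI : I ≤ C * lam ^ ((3 : ℝ) / 2)) (hJ : -C * lam ^ ((3 : ℝ) / 2) ≤ J) :
    μ ≤ m + 5 / 2 * C * √lam := by
  rw [Real.rpow_three_halves_eq_mul_sqrt hlam.le] at hEup hI hJ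
  refine le_of_mul_le_mul_left ?_ hlam
  linarith

theorem multiplier_asymptotics_general
    (D : Set (ℝ × ℝ)) (hD : MeasurableSet D)
    (q : ℝ × ℝ → ℝ) (m κ : ℝ)
    (hqm : ∀ x ∈ closure D, m ≤ q x)
    (lam₀ : ℝ)
    (ω : ℝ → ℝ × ℝ → ℝ) (Gω : ℝ → ℝ × ℝ → ℝ) (Ω : ℝ → Set (ℝ × ℝ))
    (μ : ℝ → ℝ) (En : ℝ → ℝ)
    (C : ℝ) (hC : 0 < C)
    (hΩ : ∀ lam ∈ Set.Ioo 0 lam₀, Ω lam = {x ∈ D | Gω lam x + q x < μ lam})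
    (hne : ∀ lam ∈ Set.Ioo 0 lam₀, (Ω lam).Nonempty)
    (hGpos : ∀ lam ∈ Set.Ioo 0 lam₀, ∀ x ∈ D, 0 ≤ Gω lam x)
    (hGbd : ∀ lam ∈ Set.Ioo 0 lam₀, ∀ x ∈ D, |Gω lam x| ≤ C * Real.sqrt lam)
    (hωbd : ∀ lam ∈ Set.Ioo 0 lam₀, ∀ x, 0 ≤ ω lam x ∧ ω lam x ≤ κ)
    (hωint : ∀ lam ∈ Set.Ioo 0 lam₀, ∫ x in D, ω lam x = lam)
    (hid : ∀ lam ∈ Set.Ioo 0 lam₀, En lam =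
      -(1/2) * (∫ x in D, Gω lam x * ω lam x)
      + (∫ x in D, (Gω lam x + q x - μ lam) * ω lam x) + lam * μ lam)
    (hlow : ∀ lam ∈ Set.Ioo 0 lam₀,
      -C * lam ^ ((3:ℝ)/2) ≤ ∫ x in D, (Gω lam x + q x - μ lam) * ω lam x)
    (hup : ∀ lam ∈ Set.Ioo 0 lam₀, En lam ≤ lam * m + C * lam ^ ((3:ℝ)/2)) :
    ∃ C' > 0, ∀ lam ∈ Set.Ioo 0 lam₀,
      m < μ lam ∧ μ lam ≤ m + C' * Real.sqrt lam ∧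
      ∀ x ∈ Ω lam, q x - m ≤ C' * Real.sqrt lam := by
  refine ⟨5 / 2 * C, by positivity, fun lam hlam => ?_⟩
  have hq_lt : ∀ x ∈ Ω lam, m ≤ q x ∧ q x < μ lam := fun x hx => by
    rw [hΩ lam hlam] at hx
    exact ⟨hqm x (subset_closure hx.1), by linarith [hx.2, hGpos lam hlam x hx.1]⟩
  -- `∫ ω = λ ≠ 0` already forces `ω` to be integrable (the Bochner integral is `0` otherwise).
  have hωi : IntegrableOn (ω lam) D :=
    Integrable.of_integral_ne_zero (by rw [hωint lam hlam]; exact hlam.1.ne')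
  have hI : ∫ x in D, Gω lam x * ω lam x ≤ C * lam ^ ((3 : ℝ) / 2) := by
    have := setIntegral_mul_le_mul_setIntegral hD
      (fun x hx => ⟨hGpos lam hlam x hx, (le_abs_self _).trans (hGbd lam hlam x hx)⟩)
      (fun x => (hωbd lam hlam x).1) hωi
    rw [hωint lam hlam] at this
    rwa [Real.rpow_three_halves_eq_mul_sqrt hlam.1.le, ← mul_assoc, mul_right_comm]
  have hμ := le_add_mul_sqrt_of_energy_identity hlam.1 (hid lam hlam) (hup lam hlam) hI
    (hlow lam hlam)
  obtain ⟨x, hx⟩ := hne lam hlam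
  exact ⟨(hq_lt x hx).1.trans_lt (hq_lt x hx).2, hμ,
    fun y hy => by linarith [hq_lt y hy]⟩

/-- Asymptotics of the Lagrange multiplier: under the energy identity and the listed
estimates, min q < μ^λ ≤ min q + C'λ^{1/2}, and consequently
sup_{x ∈ Ω^λ}(q(x) - min q) ≤ C'λ^{1/2}. -/
theorem multiplier_asymptotics
    (D : Set (ℝ × ℝ)) (hD : MeasurableSet D) (hDb : Bornology.IsBounded D)
    (q : ℝ × ℝ → ℝ) (m κ : ℝ) (hκ : 0 < κ)
    (hqm : ∀ x ∈ closure D, m ≤ q x)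
    (lam₀ : ℝ) (hlam₀ : 0 < lam₀)
    (ω : ℝ → ℝ × ℝ → ℝ) (Gω : ℝ → ℝ × ℝ → ℝ) (Ω : ℝ → Set (ℝ × ℝ))
    (μ : ℝ → ℝ) (En : ℝ → ℝ)
    (C : ℝ) (hC : 0 < C)
    (hΩ : ∀ lam ∈ Set.Ioo 0 lam₀, Ω lam = {x ∈ D | Gω lam x + q x < μ lam})
    (hne : ∀ lam ∈ Set.Ioo 0 lam₀, (Ω lam).Nonempty)
    (hGpos : ∀ lam ∈ Set.Ioo 0 lam₀, ∀ x ∈ D, 0 ≤ Gω lam x)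
    (hGbd : ∀ lam ∈ Set.Ioo 0 lam₀, ∀ x ∈ D, |Gω lam x| ≤ C * Real.sqrt lam)
    (hωbd : ∀ lam ∈ Set.Ioo 0 lam₀, ∀ x, 0 ≤ ω lam x ∧ ω lam x ≤ κ)
    (hωmeas : ∀ lam ∈ Set.Ioo 0 lam₀,
      AEStronglyMeasurable (ω lam) (volume.restrict D))
    (hωint : ∀ lam ∈ Set.Ioo 0 lam₀, ∫ x in D, ω lam x = lam)
    (hid : ∀ lam ∈ Set.Ioo 0 lam₀, En lam =
      -(1/2) * (∫ x in D, Gω lam x * ω lam x)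
      + (∫ x in D, (Gω lam x + q x - μ lam) * ω lam x) + lam * μ lam)
    (hlow : ∀ lam ∈ Set.Ioo 0 lam₀,
      -C * lam ^ ((3:ℝ)/2) ≤ ∫ x in D, (Gω lam x + q x - μ lam) * ω lam x)
    (hup : ∀ lam ∈ Set.Ioo 0 lam₀, En lam ≤ lam * m + C * lam ^ ((3:ℝ)/2)) :
    ∃ C' > 0, ∀ lam ∈ Set.Ioo 0 lam₀,
      m < μ lam ∧ μ lam ≤ m + C' * Real.sqrt lam ∧
      ∀ x ∈ Ω lam, q x - m ≤ C' * Real.sqrt lam :=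
  multiplier_asymptotics_general D hD q m κ hqm lam₀ ω Gω Ω μ En C hC hΩ hne hGpos hGbd hωbd hωint
    hid hlow hup
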